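/- If K ⊆ ℕ is finite and ρ ⊆ I × I is K-symmetric, then either every ξ ∈ I with (ξ, ξ) ∈ ρ lies in K × (Fin 2), or (ξ, ξ) ∈ ρ for every ξ = (ν, μ) ∈ I with ν ∉ K. -/
import Mathlib


/-- Membership in the group `𝔊` of automorphisms underlying the permutation model `Σ₂`:
permutations of `I = ℕ × Fin 2` acting by a permutation of `ℕ` together with, for each
`n`, a permutation of the pair `{n} × Fin 2`. -/
def InG (π : Equiv.Perm (ℕ × Fin 2)) : Prop :=
  ∃ (φ : Equiv.Perm ℕ) (πn : ℕ → Equiv.Perm (Fin 2)),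
    ∀ (n : ℕ) (m : Fin 2), π (n, m) = (φ n, πn n m)

/-- `π` fixes every point of `K × Fin 2`. -/
def FixesK (π : Equiv.Perm (ℕ × Fin 2)) (K : Set ℕ) : Prop :=
  ∀ ξ : ℕ × Fin 2, ξ.1 ∈ K → π ξ = ξ

/-- `δ ⊆ I` is `K`-symmetric: `π '' δ = δ` for every `π ∈ 𝔊` fixing `K × Fin 2` pointwise. -/
def SymmSet (K : Set ℕ) (δ : Set (ℕ × Fin 2)) : Prop :=
  ∀ π : Equiv.Perm (ℕ × Fin 2), InG π → FixesK π K → π '' δ = δ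

/-- `ρ ⊆ I × I` is `K`-symmetric: for every `π ∈ 𝔊` fixing `K × Fin 2` pointwise,
`(π ξ, π η) ∈ ρ ↔ (ξ, η) ∈ ρ`. -/
def SymmRel (K : Set ℕ) (ρ : Set ((ℕ × Fin 2) × (ℕ × Fin 2))) : Prop :=
  ∀ π : Equiv.Perm (ℕ × Fin 2), InG π → FixesK π K →
    ∀ ξ η : ℕ × Fin 2, ((π ξ, π η) ∈ ρ ↔ (ξ, η) ∈ ρ)

/-- If `K ⊆ ℕ` is finite and `ρ ⊆ I × I` is `K`-symmetric, then either every `ξ` with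
`(ξ, ξ) ∈ ρ` lies in `K × Fin 2`, or `(ξ, ξ) ∈ ρ` for every `ξ = (ν, μ)` with `ν ∉ K`. -/
theorem stmt_2 (K : Set ℕ) (hK : K.Finite) (ρ : Set ((ℕ × Fin 2) × (ℕ × Fin 2)))
    (hρ : SymmRel K ρ) :
    (∀ ξ : ℕ × Fin 2, (ξ, ξ) ∈ ρ → ξ.1 ∈ K) ∨
      (∀ (ν : ℕ) (μ : Fin 2), ν ∉ K → (((ν, μ) : ℕ × Fin 2), ((ν, μ) : ℕ × Fin 2)) ∈ ρ) := by
  by_cases h : ∀ ξ : ℕ × Fin 2, (ξ, ξ) ∈ ρ → ξ.1 ∈ K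
  · exact Or.inl h
  · right
    push_neg at h
    obtain ⟨⟨n₀, m₀⟩, hmem, hn₀⟩ := h
    intro ν μ hν
    set φ : Equiv.Perm ℕ := Equiv.swap n₀ ν
    set πn : ℕ → Equiv.Perm (Fin 2) := fun n => if n = n₀ then Equiv.swap m₀ μ else 1
    set π : Equiv.Perm (ℕ × Fin 2) := Equiv.prodShear φ πn with hπ
    have hInG : InG π := ⟨φ, πn, fun n m => rfl⟩
    have hFix : FixesK π K := by
      rintro ⟨n, m⟩ hn
      have h1 : n ≠ n₀ := fun e => hn₀ (e ▸ hn)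
      have h2 : n ≠ ν := fun e => hν (e ▸ hn)
      simp [hπ, Equiv.prodShear, πn, φ, Equiv.swap_apply_of_ne_of_ne h1 h2, h1]
    have := hρ π hInG hFix (n₀, m₀) (n₀, m₀)
    have hval : π (n₀, m₀) = (ν, μ) := by
      simp [hπ, Equiv.prodShear, πn, φ]
    rw [hval] at this
    exact this.mpr hmem
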